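/- Let A be an n×n matrix, u_k ∈ ℝⁿ, b_1,…,b_p ∈ ℝⁿ, and t_k, τ ∈ ℝ. Define w_0 = u_k and w_j = A w_{j−1} + ∑_{ℓ=0}^{p−j} (t_k^ℓ/ℓ!) b_{j+ℓ} for j = 1,…,p. Then φ_0(τA) u_k + ∑_{i=1}^p τ^i φ_i(τA) ∑_{j=0}^{p−i} (t_k^j/j!) b_{i+j} = τ^p φ_p(τA) w_p + ∑_{j=0}^{p−1} (τ^j/j!) w_j. -/

import Mathlib

/-!
Integrating the derivative of `θ ↦ θ ^ (q + 1) • exp ((1 - θ) • x)` over `[0, 1]` gives the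
recurrence `φ_q(M) = φ_{q+1}(M) M + (1/q!) I` in any complete normed algebra. For
`ψ_q = τ ^ q φ_q(τA)` it reads `ψ_q = ψ_{q+1} A + (τ^q/q!) I`. Applying this to `ψ_p w_p` and
using `A w_p = w_{p+1} - c_{p+1}`, where `c_j` is the `b`-sum in the definition of `w_j`, passes
from the identity for `p` to the identity for `p + 1`.
-/

open scoped Nat
open NormedSpace

/-- Matrix `φ`-functions: `φ_0(M) = exp(M)` and, for `ℓ ≥ 1`,
`φ_ℓ(M) = (1/(ℓ-1)!) ∫₀¹ exp((1-θ)M) θ^{ℓ-1} dθ` (defined entrywise). -/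
noncomputable def phiM {n : ℕ} (l : ℕ) (M : Matrix (Fin n) (Fin n) ℝ) :
    Matrix (Fin n) (Fin n) ℝ :=
  if l = 0 then exp M
  else Matrix.of fun i j =>
    (1 / ((l - 1)! : ℝ)) * ∫ θ in (0:ℝ)..1, (exp ((1 - θ) • M)) i j * θ ^ (l - 1)

section ExpIntegral

variable {𝔸 : Type*} [NormedRing 𝔸] [NormedAlgebra ℝ 𝔸] [CompleteSpace 𝔸]

theorem intervalIntegral.integral_mul_const_of_intervalIntegrable {μ : MeasureTheory.Measure ℝ}
    {f : ℝ → 𝔸} {a b : ℝ} (hf : IntervalIntegrable f μ a b) (y : 𝔸) :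
    ∫ θ in a..b, f θ * y ∂μ = (∫ θ in a..b, f θ ∂μ) * y :=
  ((ContinuousLinearMap.mul ℝ 𝔸).flip y).intervalIntegral_comp_comm hf

variable (x : 𝔸)

theorem hasDerivAt_exp_one_sub_smul (θ : ℝ) :
    HasDerivAt (fun θ : ℝ => exp ((1 - θ) • x)) (-(exp ((1 - θ) • x) * x)) θ := by
  simpa [Function.comp_def] using
    (hasDerivAt_exp_smul_const x (1 - θ)).scomp θ ((hasDerivAt_id θ).const_sub 1)

theorem continuous_exp_one_sub_smul : Continuous fun θ : ℝ => exp ((1 - θ) • x) :=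
  continuous_iff_continuousAt.2 fun θ => (hasDerivAt_exp_one_sub_smul x θ).continuousAt

theorem exp_eq_integral_exp_one_sub_smul_mul_add_one :
    exp x = (∫ θ in (0:ℝ)..1, exp ((1 - θ) • x)) * x + 1 := by
  have hint := (continuous_exp_one_sub_smul x).intervalIntegrable (μ := MeasureTheory.volume) 0 1
  have hftc := intervalIntegral.integral_eq_sub_of_hasDerivAt
    (fun θ _ => hasDerivAt_exp_one_sub_smul x θ) (hint.mul_const x).neg
  rw [intervalIntegral.integral_neg,
    intervalIntegral.integral_mul_const_of_intervalIntegrable hint] at hftc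
  simp only [sub_self, zero_smul, exp_zero, sub_zero, one_smul] at hftc
  calc exp x = -(1 - exp x) + 1 := by abel
    _ = _ := by rw [← hftc, neg_neg]

theorem succ_smul_integral_pow_smul_exp_one_sub_smul (q : ℕ) :
    ((q : ℝ) + 1) • ∫ θ in (0:ℝ)..1, θ ^ q • exp ((1 - θ) • x) =
      (∫ θ in (0:ℝ)..1, θ ^ (q + 1) • exp ((1 - θ) • x)) * x + 1 := by
  have hderiv (θ : ℝ) : HasDerivAt (fun θ : ℝ => θ ^ (q + 1) • exp ((1 - θ) • x))
      (((q : ℝ) + 1) • (θ ^ q • exp ((1 - θ) • x)) - (θ ^ (q + 1) • exp ((1 - θ) • x)) * x) θ := by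
    refine ((hasDerivAt_pow (q + 1) θ).smul (hasDerivAt_exp_one_sub_smul x θ)).congr_deriv ?_
    rw [smul_neg, smul_mul_assoc, mul_smul]
    push_cast
    abel
  have hcont (k : ℕ) : Continuous fun θ : ℝ => θ ^ k • exp ((1 - θ) • x) :=
    (continuous_pow k).smul (continuous_exp_one_sub_smul x)
  have hint_q : IntervalIntegrable (fun θ : ℝ => ((q : ℝ) + 1) • (θ ^ q • exp ((1 - θ) • x)))
      MeasureTheory.volume 0 1 :=
    (continuous_const.smul (hcont q)).intervalIntegrable 0 1
  have hint_succ := (hcont (q + 1)).intervalIntegrable (μ := MeasureTheory.volume) 0 1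
  have hftc := intervalIntegral.integral_eq_sub_of_hasDerivAt (fun θ _ => hderiv θ)
    (hint_q.sub (hint_succ.mul_const x))
  rw [intervalIntegral.integral_sub hint_q (hint_succ.mul_const x),
    intervalIntegral.integral_smul,
    intervalIntegral.integral_mul_const_of_intervalIntegrable hint_succ] at hftc
  simp only [one_pow, sub_self, zero_smul, exp_zero, one_smul, ne_eq, add_eq_zero, one_ne_zero,
    and_false, not_false_eq_true, zero_pow, sub_zero] at hftc
  rw [← hftc]
  abel

end ExpIntegral

section MatrixPhi

-- Only needed to make matrices a complete normed algebra; all norms on them are equivalent.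
attribute [local instance] Matrix.linftyOpNormedRing Matrix.linftyOpNormedAlgebra

variable {n : ℕ} (M : Matrix (Fin n) (Fin n) ℝ)

theorem phiM_succ (q : ℕ) :
    phiM (q + 1) M = (q ! : ℝ)⁻¹ • ∫ θ in (0:ℝ)..1, θ ^ q • exp ((1 - θ) • M) := by
  ext i j
  have hint := ((continuous_pow q).smul (continuous_exp_one_sub_smul M)).intervalIntegrable
    (μ := MeasureTheory.volume) 0 1
  calc phiM (q + 1) M i j = (q ! : ℝ)⁻¹ * ∫ θ in (0:ℝ)..1, θ ^ q * exp ((1 - θ) • M) i j := by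
        simp [phiM, mul_comm]
    _ = _ := congrArg _
        ((Matrix.entryLinearMap ℝ ℝ i j).toContinuousLinearMap.intervalIntegral_comp_comm hint)

theorem phiM_eq_mul_add (q : ℕ) :
    phiM q M = phiM (q + 1) M * M + (q ! : ℝ)⁻¹ • 1 := by
  cases q with
  | zero =>
    rw [phiM_succ M 0]
    simp only [phiM, if_pos, pow_zero, one_smul, Nat.factorial_zero, Nat.cast_one, inv_one]
    exact exp_eq_integral_exp_one_sub_smul_mul_add_one M
  | succ q =>
    have hfac : (q ! : ℝ)⁻¹ = ((q + 1)! : ℝ)⁻¹ * ((q : ℝ) + 1) := by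
      push_cast [Nat.factorial_succ]
      field_simp
    rw [phiM_succ, phiM_succ, smul_mul_assoc, ← smul_add, hfac, mul_smul]
    exact congrArg _ (succ_smul_integral_pow_smul_exp_one_sub_smul M q)

end MatrixPhi

namespace Matrix

theorem mulVec_telescope {R m : Type*} [CommRing R] [Fintype m] [DecidableEq m]
    {A : Matrix m m R} {ψ : ℕ → Matrix m m R} {a : ℕ → R}
    (hψ : ∀ q, ψ q = ψ (q + 1) * A + a q • 1) {w c : ℕ → m → R} (p : ℕ)
    (hw : ∀ j, 1 ≤ j → j ≤ p → w j = A *ᵥ w (j - 1) + c j) :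
    ψ 0 *ᵥ w 0 + ∑ i ∈ Finset.Icc 1 p, ψ i *ᵥ c i =
      ψ p *ᵥ w p + ∑ j ∈ Finset.range p, a j • w j := by
  induction p with
  | zero => simp
  | succ p ih =>
    have hAw : A *ᵥ w p = w (p + 1) - c (p + 1) := by
      rw [hw (p + 1) (by omega) le_rfl, Nat.add_sub_cancel, add_sub_cancel_right]
    rw [Finset.sum_Icc_succ_top (by omega), ← add_assoc, ih fun j h1 h2 => hw j h1 (by omega),
      hψ p, add_mulVec, ← mulVec_mulVec, hAw, smul_mulVec, one_mulVec, mulVec_sub,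
      Finset.sum_range_succ]
    abel

end Matrix

theorem timestep_formula_general {n : ℕ} (A : Matrix (Fin n) (Fin n) ℝ) (p : ℕ)
    (uk : Fin n → ℝ) (b : ℕ → Fin n → ℝ) (tk τ : ℝ) (w : ℕ → Fin n → ℝ)
    (hw0 : w 0 = uk)
    (hw : ∀ j, 1 ≤ j → j ≤ p → w j = A.mulVec (w (j - 1)) +
      ∑ l ∈ Finset.range (p - j + 1), (tk ^ l / l !) • b (j + l)) :
    (phiM 0 (τ • A)).mulVec uk +
      ∑ i ∈ Finset.Icc 1 p, τ ^ i • (phiM i (τ • A)).mulVec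
        (∑ j ∈ Finset.range (p - i + 1), (tk ^ j / j !) • b (i + j)) =
    τ ^ p • (phiM p (τ • A)).mulVec (w p) +
      ∑ j ∈ Finset.range p, (τ ^ j / j !) • w j := by
  have hψ (q : ℕ) : τ ^ q • phiM q (τ • A) =
      τ ^ (q + 1) • phiM (q + 1) (τ • A) * A + (τ ^ q / q !) • 1 := by
    rw [phiM_eq_mul_add (τ • A) q, Matrix.mul_smul, smul_add, smul_smul, smul_mul_assoc,
      smul_smul, pow_succ, div_eq_mul_inv]
  simpa [hw0, Matrix.smul_mulVec] using Matrix.mulVec_telescope hψ p hw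

theorem timestep_formula {n : ℕ} (A : Matrix (Fin n) (Fin n) ℝ) (p : ℕ) (hp : 1 ≤ p)
    (uk : Fin n → ℝ) (b : ℕ → Fin n → ℝ) (tk τ : ℝ) (w : ℕ → Fin n → ℝ)
    (hw0 : w 0 = uk)
    (hw : ∀ j, 1 ≤ j → j ≤ p → w j = A.mulVec (w (j - 1)) +
      ∑ l ∈ Finset.range (p - j + 1), (tk ^ l / l !) • b (j + l)) :
    (phiM 0 (τ • A)).mulVec uk +
      ∑ i ∈ Finset.Icc 1 p, τ ^ i • (phiM i (τ • A)).mulVec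
        (∑ j ∈ Finset.range (p - i + 1), (tk ^ j / j !) • b (i + j)) =
    τ ^ p • (phiM p (τ • A)).mulVec (w p) +
      ∑ j ∈ Finset.range p, (τ ^ j / j !) • w j :=
  timestep_formula_general A p uk b tk τ w hw0 hw
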